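/- arXiv:2012.01667 — 6 statements merged into one kernel-verified Lean document; each statement's English description precedes it below -/
import Mathlib

section
/- Let $\alpha \in (0,1)$ and $\lambda > 0$. If $b \ge (2\lambda)^\alpha$, then $\left| \frac{\sin(\alpha\pi)}{\alpha\pi} \int_b^\infty \frac{\lambda}{t^{1/\alpha} + \lambda} \, dt \right| \le \frac{\sin(\alpha\pi)(3-2\alpha)\lambda}{\pi(1-\alpha)(2-\alpha)} b^{1-1/\alpha}$. -/
open Real MeasureTheory Set

theorem scalar_upper_truncation_bound
    (α lam b : ℝ) (hα : α ∈ Set.Ioo (0:ℝ) 1) (hlam : 0 < lam)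
    (hb : (2 * lam) ^ α ≤ b) :
    |Real.sin (α * π) / (α * π) * ∫ t in Set.Ioi b, lam / (t ^ (1/α) + lam)|
      ≤ Real.sin (α * π) * (3 - 2*α) * lam / (π * (1 - α) * (2 - α)) * b ^ (1 - 1/α) := by
  obtain ⟨hα0, hα1⟩ := hα
  have hb0 : 0 < b := lt_of_lt_of_le (Real.rpow_pos_of_pos (by linarith) α) hb
  set β : ℝ := 1/α with hβdef
  have hβ : 1 < β := (one_lt_div hα0).2 (by linarith)
  have hsin : 0 < Real.sin (α * π) := Real.sin_pos_of_pos_of_lt_pi (by positivity)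
    (by nlinarith [Real.pi_pos])
  -- integrability of the dominating function
  have hig : IntegrableOn (fun t : ℝ => lam * t ^ (-β)) (Ioi b) :=
    ((integrableOn_Ioi_rpow_of_lt (by linarith) hb0).const_mul lam)
  -- pointwise bound and nonnegativity on Ioi b
  have hbound : ∀ t ∈ Ioi b, lam / (t ^ β + lam) ≤ lam * t ^ (-β) := by
    intro t ht
    have ht0 : 0 < t := hb0.trans ht
    have htp : 0 < t ^ β := Real.rpow_pos_of_pos ht0 β
    rw [Real.rpow_neg ht0.le, ← div_eq_mul_inv, div_le_div_iff₀ (by linarith) htp]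
    nlinarith
  have hnn : ∀ t ∈ Ioi b, 0 ≤ lam / (t ^ β + lam) := by
    intro t ht
    have ht0 : 0 < t := hb0.trans ht
    have htp : 0 < t ^ β := Real.rpow_pos_of_pos ht0 β
    positivity
  -- integrability of the integrand
  have hif : IntegrableOn (fun t : ℝ => lam / (t ^ β + lam)) (Ioi b) := by
    apply Integrable.mono' hig
    · apply ContinuousOn.aestronglyMeasurable _ measurableSet_Ioi
      apply ContinuousOn.div continuousOn_const
      · exact ContinuousOn.add (fun t ht => (Real.continuousAt_rpow_const t β
          (Or.inl (hb0.trans ht).ne')).continuousWithinAt) continuousOn_const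
      · intro t ht
        have := Real.rpow_pos_of_pos (hb0.trans ht) β
        positivity
    · filter_upwards [ae_restrict_mem measurableSet_Ioi] with t ht
      rw [Real.norm_eq_abs, abs_of_nonneg (hnn t ht)]
      exact hbound t ht
  -- bound the integral
  have hIle : (∫ t in Ioi b, lam / (t ^ β + lam)) ≤ lam * (b ^ (1 - β) / (β - 1)) := by
    have h1 : (∫ t in Ioi b, lam / (t ^ β + lam)) ≤ ∫ t in Ioi b, lam * t ^ (-β) :=
      setIntegral_mono_on hif hig measurableSet_Ioi hbound
    have h2 : (∫ t in Ioi b, lam * t ^ (-β)) = lam * (b ^ (1 - β) / (β - 1)) := by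
      rw [integral_const_mul, integral_Ioi_rpow_of_lt (by linarith) hb0]
      rw [show -β + 1 = 1 - β by ring]
      rw [neg_div, ← div_neg, neg_sub]
    linarith
  have hInn : 0 ≤ ∫ t in Ioi b, lam / (t ^ β + lam) :=
    setIntegral_nonneg measurableSet_Ioi hnn
  have hpi := Real.pi_pos
  rw [abs_of_nonneg (by positivity)]
  have hbp : 0 < b ^ (1 - β) := Real.rpow_pos_of_pos hb0 _
  have h1α : (1:ℝ) - α ≠ 0 := by linarith
  have hβ1 : β - 1 = (1 - α) / α := by rw [hβdef]; field_simp
  have hpos1 : 0 < π * (1 - α) := mul_pos hpi (by linarith)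
  have hpos2 : 0 < π * (1 - α) * (2 - α) := mul_pos hpos1 (by linarith)
  have hcoef : 1 / (π * (1 - α)) ≤ (3 - 2*α) / (π * (1 - α) * (2 - α)) := by
    rw [div_le_div_iff₀ hpos1 hpos2]
    nlinarith [mul_nonneg hpi.le (sq_nonneg (1 - α))]
  have e1 : Real.sin (α * π) / (α * π) * (lam * (b ^ (1 - β) / (β - 1)))
      = (Real.sin (α * π) * lam * b ^ (1 - β)) * (1 / (π * (1 - α))) := by
    rw [hβ1]
    field_simp [hα0.ne', Real.pi_ne_zero, h1α]
  have e2 : Real.sin (α * π) * (3 - 2*α) * lam / (π * (1 - α) * (2 - α)) * b ^ (1 - β)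
      = (Real.sin (α * π) * lam * b ^ (1 - β)) * ((3 - 2*α) / (π * (1 - α) * (2 - α))) := by
    ring
  have key : Real.sin (α * π) / (α * π) * (lam * (b ^ (1 - β) / (β - 1)))
      ≤ Real.sin (α * π) * (3 - 2*α) * lam / (π * (1 - α) * (2 - α)) * b ^ (1 - β) := by
    rw [e1, e2]
    exact mul_le_mul_of_nonneg_left hcoef (by positivity)
  calc Real.sin (α * π) / (α * π) * ∫ t in Ioi b, lam / (t ^ β + lam)
      ≤ Real.sin (α * π) / (α * π) * (lam * (b ^ (1 - β) / (β - 1))) := by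
        apply mul_le_mul_of_nonneg_left hIle (by positivity)
    _ ≤ _ := key
end

section
/- Let $\alpha \in (0,1)$, $b > 0$, and let $A$ be a complex $n \times n$ matrix with $b^{-1/\alpha} \|A\| \le 1/2$ for a consistent matrix norm. Then $\left\| A \int_b^\infty (t^{1/\alpha} I + A)^{-1} \, dt \right\| \le \|A\| \left( \frac{\alpha}{1-\alpha} + \frac{\alpha}{2-\alpha} \right) b^{1-1/\alpha}$. -/
open Real MeasureTheory

attribute [local instance] Matrix.frobeniusNormedAddCommGroup Matrix.frobeniusNormedSpace

set_option maxHeartbeats 1000000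

noncomputable section

def NuSp {n : ℕ} (_ν : Matrix (Fin n) (Fin n) ℂ → ℝ) : Type := Matrix (Fin n) (Fin n) ℂ

instance {n : ℕ} (ν : Matrix (Fin n) (Fin n) ℂ → ℝ) : AddCommGroup (NuSp ν) :=
  inferInstanceAs (AddCommGroup (Matrix (Fin n) (Fin n) ℂ))
instance {n : ℕ} (ν : Matrix (Fin n) (Fin n) ℂ → ℝ) : Module ℂ (NuSp ν) :=
  inferInstanceAs (Module ℂ (Matrix (Fin n) (Fin n) ℂ))
instance {n : ℕ} (ν : Matrix (Fin n) (Fin n) ℂ → ℝ) : Module.Finite ℂ (NuSp ν) :=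
  inferInstanceAs (Module.Finite ℂ (Matrix (Fin n) (Fin n) ℂ))

theorem matrix_upper_truncation_bound
    {n : ℕ} (α b : ℝ) (hα : α ∈ Set.Ioo (0:ℝ) 1) (hb : 0 < b)
    (A : Matrix (Fin n) (Fin n) ℂ)
    (ν : Matrix (Fin n) (Fin n) ℂ → ℝ)
    (hν_nonneg : ∀ X, 0 ≤ ν X)
    (hν_def : ∀ X, ν X = 0 ↔ X = 0)
    (hν_add : ∀ X Y, ν (X + Y) ≤ ν X + ν Y)
    (hν_smul : ∀ (c : ℂ) X, ν (c • X) = ‖c‖ * ν X)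
    (hν_mul : ∀ X Y, ν (X * Y) ≤ ν X * ν Y)
    (hbound : b ^ (-(1/α)) * ν A ≤ 1/2) :
    ν (A * ∫ t in Set.Ioi b, ((t ^ (1/α)) • (1 : Matrix (Fin n) (Fin n) ℂ) + A)⁻¹)
      ≤ ν A * (α / (1 - α) + α / (2 - α)) * b ^ (1 - 1/α) := by
  obtain ⟨hα0, hα1⟩ := hα
  have hν0 : ν 0 = 0 := (hν_def 0).2 rfl
  by_cases hA : A = 0
  · subst hA
    simp [hν0]
  -- nondegenerate case
  have hνA : 0 < ν A := lt_of_le_of_ne (hν_nonneg A) fun h => hA ((hν_def A).1 h.symm)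
  set r : ℝ := 1/α with hrdef
  have hr1 : 1 < r := one_lt_one_div hα0 hα1
  letI : UniformSpace (Matrix (Fin n) (Fin n) ℂ) := PseudoMetricSpace.toUniformSpace
  letI : TopologicalSpace (Matrix (Fin n) (Fin n) ℂ) := UniformSpace.toTopologicalSpace
  -- the ν-normed space
  letI : NormedAddCommGroup (NuSp ν) := AddGroupNorm.toNormedAddCommGroup
    { toFun := ν
      map_zero' := hν0
      add_le' := hν_add
      neg' := fun X => by
        have h : -X = (-1 : ℂ) • X := by simp
        rw [h]; exact (hν_smul (-1) X).trans (by simp)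
      eq_zero_of_map_eq_zero' := fun X h => (hν_def X).1 h }
  letI : NormedSpace ℂ (NuSp ν) := ⟨fun c x => le_of_eq (hν_smul c x)⟩
  haveI : FiniteDimensional ℂ (NuSp ν) := inferInstance
  haveI : CompleteSpace (NuSp ν) := FiniteDimensional.complete ℂ _
  let eL : Matrix (Fin n) (Fin n) ℂ ≃ₗ[ℂ] NuSp ν := LinearEquiv.refl ℂ (Matrix (Fin n) (Fin n) ℂ)
  let e : Matrix (Fin n) (Fin n) ℂ ≃L[ℂ] NuSp ν := eL.toContinuousLinearEquiv
  have hnorm : ∀ X : Matrix (Fin n) (Fin n) ℂ, ‖e X‖ = ν X := fun X => rfl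
  obtain ⟨C, hC0, hC⟩ : ∃ C : ℝ, 0 ≤ C ∧ ∀ X : Matrix (Fin n) (Fin n) ℂ, ‖X‖ ≤ C * ν X := by
    refine ⟨‖(e.symm : NuSp ν →L[ℂ] Matrix (Fin n) (Fin n) ℂ)‖, norm_nonneg _, fun X => ?_⟩
    calc ‖X‖ = ‖(e.symm : NuSp ν →L[ℂ] Matrix (Fin n) (Fin n) ℂ) (e X)‖ := by
          rw [ContinuousLinearEquiv.coe_coe, e.symm_apply_apply]
    _ ≤ ‖(e.symm : NuSp ν →L[ℂ] Matrix (Fin n) (Fin n) ℂ)‖ * ‖e X‖ :=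
        (e.symm : NuSp ν →L[ℂ] Matrix (Fin n) (Fin n) ℂ).le_opNorm _
    _ = _ := by rw [hnorm]
  have key_tsum : ∀ (g : ℕ → Matrix (Fin n) (Fin n) ℂ), Summable g →
      Summable (fun k => ν (g k)) → ν (∑' k, g k) ≤ ∑' k, ν (g k) := by
    intro g hg hgν
    have h1 : e (∑' k, g k) = ∑' k, e (g k) :=
      (e : Matrix (Fin n) (Fin n) ℂ →L[ℂ] NuSp ν).map_tsum hg
    calc ν (∑' k, g k) = ‖e (∑' k, g k)‖ := (hnorm _).symm
    _ = ‖∑' k, e (g k)‖ := by rw [h1]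
    _ ≤ ∑' k, ‖e (g k)‖ := norm_tsum_le_tsum_norm (by simpa only [hnorm] using hgν)
    _ = ∑' k, ν (g k) := by simp only [hnorm]
  have key_int : ∀ (g : ℝ → Matrix (Fin n) (Fin n) ℂ),
      Integrable g (volume.restrict (Set.Ioi b)) →
      ν (∫ t in Set.Ioi b, g t) ≤ ∫ t in Set.Ioi b, ν (g t) := by
    intro g hg
    have h1 : e (∫ t in Set.Ioi b, g t) = ∫ t in Set.Ioi b, e (g t) :=
      ((e : Matrix (Fin n) (Fin n) ℂ →L[ℂ] NuSp ν).integral_comp_comm hg).symm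
    calc ν (∫ t in Set.Ioi b, g t) = ‖e (∫ t in Set.Ioi b, g t)‖ := (hnorm _).symm
    _ = ‖∫ t in Set.Ioi b, e (g t)‖ := by rw [h1]
    _ ≤ ∫ t in Set.Ioi b, ‖e (g t)‖ := norm_integral_le_integral_norm _
    _ = ∫ t in Set.Ioi b, ν (g t) := by simp only [hnorm]
  -- basic ν facts
  have hνpow1 : ∀ k : ℕ, ν (A ^ (k+1)) ≤ ν A ^ (k+1) := by
    intro k
    induction k with
    | zero => simp
    | succ k ih =>
      calc ν (A ^ (k+2)) = ν (A ^ (k+1) * A) := by rw [← pow_succ]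
      _ ≤ ν (A ^ (k+1)) * ν A := hν_mul _ _
      _ ≤ ν A ^ (k+1) * ν A := by
          exact mul_le_mul_of_nonneg_right ih (hν_nonneg A)
      _ = ν A ^ (k+2) := by rw [← pow_succ]
  have hνpow0 : ∀ k : ℕ, ν (A ^ k) ≤ ν 1 * ν A ^ k := by
    intro k
    cases k with
    | zero => simp
    | succ k =>
      have h1 : (1:ℝ) ≤ ν 1 := by
        have h2 : 0 < ν 1 := by
          refine lt_of_le_of_ne (hν_nonneg 1) fun h => ?_
          have h3 : (1 : Matrix (Fin n) (Fin n) ℂ) = 0 := (hν_def 1).1 h.symm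
          exact hA (by rw [← mul_one A, h3, mul_zero])
        have h4 := hν_mul 1 1
        rw [mul_one] at h4
        nlinarith
      calc ν (A ^ (k+1)) ≤ ν A ^ (k+1) := hνpow1 k
      _ ≤ ν 1 * ν A ^ (k+1) := le_mul_of_one_le_left (by positivity) h1
  -- real smul to complex smul
  have hsmulR : ∀ (y : ℝ) (X : Matrix (Fin n) (Fin n) ℂ), y • X = ((y:ℝ):ℂ) • X := by
    intro y X
    ext i j
    simp [Matrix.smul_apply, Complex.real_smul]
  -- left multiplication as a continuous linear map
  let L : Matrix (Fin n) (Fin n) ℂ →L[ℂ] Matrix (Fin n) (Fin n) ℂ :=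
    (LinearMap.mulLeft ℂ A).toContinuousLinearMap
  have hLapp : ∀ X, L X = A * X := fun X => rfl
  let w : ℝ → ℂ := fun t => ((t ^ (-r) : ℝ) : ℂ)
  let T : ℝ → Matrix (Fin n) (Fin n) ℂ := fun t => ∑' k : ℕ, (-(w t))^k • A^k
  have hkey : ∀ t : ℝ, b < t →
      ((t ^ r) • (1 : Matrix (Fin n) (Fin n) ℂ) + A)⁻¹ = w t • T t ∧
      IsUnit ((t ^ r) • (1 : Matrix (Fin n) (Fin n) ℂ) + A).det ∧
      ν (A * ((t ^ r) • (1 : Matrix (Fin n) (Fin n) ℂ) + A)⁻¹)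
        ≤ ν A * t ^ (-r) + 2 * (ν A)^2 * t ^ (-(2*r)) ∧
      ν (((t ^ r) • (1 : Matrix (Fin n) (Fin n) ℂ) + A)⁻¹) ≤ 2 * ν 1 * t ^ (-r) := by
    intro t ht
    have ht0 : 0 < t := hb.trans ht
    have hx0 : (0:ℝ) ≤ t ^ (-r) := Real.rpow_nonneg ht0.le _
    have hwn : ‖w t‖ = t ^ (-r) := by
      simp only [w, Complex.norm_real]
      exact abs_of_nonneg hx0
    have hxA : t ^ (-r) * ν A ≤ 1/2 := by
      have h5 : t ^ (-r) ≤ b ^ (-r) := Real.rpow_le_rpow_of_nonpos hb ht.le (by linarith)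
      calc t ^ (-r) * ν A ≤ b ^ (-r) * ν A := mul_le_mul_of_nonneg_right h5 (hν_nonneg A)
      _ ≤ 1/2 := hbound
    have hxA0 : 0 ≤ t ^ (-r) * ν A := mul_nonneg hx0 (hν_nonneg A)
    have hxA1 : t ^ (-r) * ν A < 1 := lt_of_le_of_lt hxA (by norm_num)
    have hterm0 : ∀ k : ℕ, ‖(-(w t))^k • A^k‖ ≤ (C * ν 1) * (t^(-r) * ν A)^k := by
      intro k
      rw [norm_smul, norm_pow, norm_neg, hwn]
      calc (t^(-r))^k * ‖A^k‖ ≤ (t^(-r))^k * (C * (ν 1 * ν A ^ k)) := by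
            refine mul_le_mul_of_nonneg_left ?_ (pow_nonneg hx0 k)
            exact le_trans (hC _) (mul_le_mul_of_nonneg_left (hνpow0 k) hC0)
      _ = (C * ν 1) * (t^(-r) * ν A)^k := by rw [mul_pow]; ring
    have hTsum : Summable (fun k : ℕ => (-(w t))^k • A^k) :=
      Summable.of_norm (Summable.of_nonneg_of_le (fun k => norm_nonneg _) hterm0
        ((summable_geometric_of_lt_one hxA0 hxA1).mul_left _))
    have hmap : (fun k : ℕ => L ((-(w t))^k • A^k)) = fun k : ℕ => (-(w t))^k • A^(k+1) := by
      funext k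
      rw [_root_.map_smul, hLapp, ← pow_succ']
    have hT1sum : Summable (fun k : ℕ => (-(w t))^k • A^(k+1)) := by
      refine (hTsum.map L L.continuous).congr fun k => ?_
      show L ((-(w t))^k • A^k) = (-(w t))^k • A^(k+1)
      rw [_root_.map_smul, hLapp, ← pow_succ']
    have hAT : A * T t = ∑' k : ℕ, (-(w t))^k • A^(k+1) := by
      calc A * T t = L (T t) := rfl
      _ = ∑' k : ℕ, L ((-(w t))^k • A^k) := L.map_tsum hTsum
      _ = ∑' k : ℕ, (-(w t))^k • A^(k+1) := by rw [hmap]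
    have huw : ((t ^ r : ℝ) : ℂ) * w t = 1 := by
      have : (t:ℝ) ^ r * t ^ (-r) = 1 := by
        rw [← Real.rpow_add ht0]; simp
      calc ((t ^ r : ℝ) : ℂ) * w t = (((t ^ r * t ^ (-r) : ℝ)) : ℂ) := by
            rw [Complex.ofReal_mul]
      _ = 1 := by rw [this]; norm_num
    have hsm : (t ^ r) • (1 : Matrix (Fin n) (Fin n) ℂ) + A
        = ((t ^ r : ℝ) : ℂ) • (1 : Matrix (Fin n) (Fin n) ℂ) + A := by rw [hsmulR]
    have hshift : w t • (A * T t) = -(T t - 1) := by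
      rw [hAT, ← Summable.tsum_const_smul _ hT1sum]
      have h12 : ∀ k : ℕ, w t • ((-(w t))^k • A^(k+1)) = -((-(w t))^(k+1) • A^(k+1)) := by
        intro k
        rw [smul_smul, ← neg_smul]
        congr 1
        rw [pow_succ']
        ring
      rw [tsum_congr h12, tsum_neg]
      have h13 := Summable.tsum_eq_zero_add hTsum
      rw [pow_zero, pow_zero, one_smul] at h13
      have h15 : (∑' k : ℕ, (-(w t))^(k+1) • A^(k+1)) = T t - 1 := by
        rw [show T t = ∑' k : ℕ, (-(w t))^k • A^k from rfl, h13]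
        abel
      rw [h15]
    have hMS : (((t ^ r : ℝ) : ℂ) • (1 : Matrix (Fin n) (Fin n) ℂ) + A) * (w t • T t) = 1 := by
      calc (((t ^ r : ℝ) : ℂ) • (1 : Matrix (Fin n) (Fin n) ℂ) + A) * (w t • T t)
          = ((t ^ r : ℝ) : ℂ) • (w t • T t) + A * (w t • T t) := by
            rw [add_mul, Matrix.smul_mul, one_mul]
      _ = (((t ^ r : ℝ) : ℂ) * w t) • T t + w t • (A * T t) := by
            rw [smul_smul, mul_smul_comm]
      _ = T t + -(T t - 1) := by rw [huw, one_smul, hshift]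
      _ = 1 := by abel
    have hinv : ((t ^ r) • (1 : Matrix (Fin n) (Fin n) ℂ) + A)⁻¹ = w t • T t := by
      rw [hsm]; exact Matrix.inv_eq_right_inv hMS
    have hdet : IsUnit ((t ^ r) • (1 : Matrix (Fin n) (Fin n) ℂ) + A).det := by
      rw [hsm]; exact Matrix.isUnit_det_of_right_inverse hMS
    -- ν bounds
    have hterm1 : ∀ k : ℕ, ν ((-(w t))^k • A^(k+1)) ≤ ν A * (t^(-r) * ν A)^k := by
      intro k
      rw [hν_smul, norm_pow, norm_neg, hwn]
      calc (t^(-r))^k * ν (A^(k+1))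
          ≤ (t^(-r))^k * ν A^(k+1) := mul_le_mul_of_nonneg_left (hνpow1 k) (pow_nonneg hx0 k)
      _ = ν A * (t^(-r) * ν A)^k := by rw [mul_pow, pow_succ]; ring
    have hsb1 : Summable (fun k : ℕ => ν A * (t^(-r) * ν A)^k) :=
      (summable_geometric_of_lt_one hxA0 hxA1).mul_left _
    have hsa1 : Summable (fun k : ℕ => ν ((-(w t))^k • A^(k+1))) :=
      Summable.of_nonneg_of_le (fun k => hν_nonneg _) hterm1 hsb1
    have hνAT : ν (A * T t) ≤ ν A * (1 - t^(-r) * ν A)⁻¹ := by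
      rw [hAT]
      calc ν (∑' k : ℕ, (-(w t))^k • A^(k+1)) ≤ ∑' k : ℕ, ν ((-(w t))^k • A^(k+1)) :=
            key_tsum _ hT1sum hsa1
      _ ≤ ∑' k : ℕ, ν A * (t^(-r) * ν A)^k := hsa1.tsum_le_tsum hterm1 hsb1
      _ = ν A * (1 - t^(-r) * ν A)⁻¹ := by
            rw [tsum_mul_left, tsum_geometric_of_lt_one hxA0 hxA1]
    have hterm2 : ∀ k : ℕ, ν ((-(w t))^k • A^k) ≤ ν 1 * (t^(-r) * ν A)^k := by
      intro k
      rw [hν_smul, norm_pow, norm_neg, hwn]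
      calc (t^(-r))^k * ν (A^k)
          ≤ (t^(-r))^k * (ν 1 * ν A^k) := mul_le_mul_of_nonneg_left (hνpow0 k) (pow_nonneg hx0 k)
      _ = ν 1 * (t^(-r) * ν A)^k := by rw [mul_pow]; ring
    have hsb2 : Summable (fun k : ℕ => ν 1 * (t^(-r) * ν A)^k) :=
      (summable_geometric_of_lt_one hxA0 hxA1).mul_left _
    have hsa2 : Summable (fun k : ℕ => ν ((-(w t))^k • A^k)) :=
      Summable.of_nonneg_of_le (fun k => hν_nonneg _) hterm2 hsb2
    have hνT : ν (T t) ≤ ν 1 * (1 - t^(-r) * ν A)⁻¹ := by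
      calc ν (T t) ≤ ∑' k : ℕ, ν ((-(w t))^k • A^k) := key_tsum _ hTsum hsa2
      _ ≤ ∑' k : ℕ, ν 1 * (t^(-r) * ν A)^k := hsa2.tsum_le_tsum hterm2 hsb2
      _ = ν 1 * (1 - t^(-r) * ν A)⁻¹ := by
            rw [tsum_mul_left, tsum_geometric_of_lt_one hxA0 hxA1]
    have hinvle2 : (1 - t^(-r) * ν A)⁻¹ ≤ 2 := by
      have h8 : (1:ℝ)/2 ≤ 1 - t^(-r) * ν A := by linarith
      calc (1 - t^(-r) * ν A)⁻¹ ≤ ((1:ℝ)/2)⁻¹ := by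
            apply inv_anti₀ (by norm_num) h8
      _ = 2 := by norm_num
    have hinvle3 : (1 - t^(-r) * ν A)⁻¹ ≤ 1 + 2 * (t^(-r) * ν A) := by
      have h8 : (0:ℝ) < 1 - t^(-r) * ν A := by linarith
      rw [← one_div, div_le_iff₀ h8]
      nlinarith [mul_nonneg hxA0 (by linarith : (0:ℝ) ≤ 1 - 2*(t^(-r) * ν A))]
    have hνinv : ν (((t ^ r) • (1 : Matrix (Fin n) (Fin n) ℂ) + A)⁻¹) ≤ 2 * ν 1 * t ^ (-r) := by
      rw [hinv, hν_smul, hwn]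
      calc t^(-r) * ν (T t) ≤ t^(-r) * (ν 1 * (1 - t^(-r) * ν A)⁻¹) :=
            mul_le_mul_of_nonneg_left hνT hx0
      _ ≤ t^(-r) * (ν 1 * 2) := by
            refine mul_le_mul_of_nonneg_left ?_ hx0
            exact mul_le_mul_of_nonneg_left hinvle2 (hν_nonneg 1)
      _ = 2 * ν 1 * t ^ (-r) := by ring
    have hrr : t^(-r) * t^(-r) = t^(-(2*r)) := by
      rw [← Real.rpow_add ht0]
      ring_nf
    have hνP : ν (A * ((t ^ r) • (1 : Matrix (Fin n) (Fin n) ℂ) + A)⁻¹)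
        ≤ ν A * t ^ (-r) + 2 * (ν A)^2 * t ^ (-(2*r)) := by
      rw [hinv, mul_smul_comm, hν_smul, hwn]
      calc t^(-r) * ν (A * T t) ≤ t^(-r) * (ν A * (1 - t^(-r) * ν A)⁻¹) :=
            mul_le_mul_of_nonneg_left hνAT hx0
      _ ≤ t^(-r) * (ν A * (1 + 2 * (t^(-r) * ν A))) := by
            refine mul_le_mul_of_nonneg_left ?_ hx0
            exact mul_le_mul_of_nonneg_left hinvle3 (hν_nonneg A)
      _ = ν A * t^(-r) + 2 * (ν A)^2 * (t^(-r) * t^(-r)) := by ring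
      _ = ν A * t^(-r) + 2 * (ν A)^2 * t^(-(2*r)) := by rw [hrr]
    exact ⟨hinv, hdet, hνP, hνinv⟩
  set F : ℝ → Matrix (Fin n) (Fin n) ℂ :=
    fun t => ((t ^ r) • (1 : Matrix (Fin n) (Fin n) ℂ) + A)⁻¹ with hFdef
  have hint1 : IntegrableOn (fun t : ℝ => t ^ (-r)) (Set.Ioi b) :=
    integrableOn_Ioi_rpow_of_lt (by linarith) hb
  have hint2 : IntegrableOn (fun t : ℝ => t ^ (-(2*r))) (Set.Ioi b) :=
    integrableOn_Ioi_rpow_of_lt (by linarith) hb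
  have hMcont : ContinuousOn
      (fun t : ℝ => (t ^ r) • (1 : Matrix (Fin n) (Fin n) ℂ) + A) (Set.Ioi b) := by
    refine ContinuousOn.add (ContinuousOn.smul (f := fun t : ℝ => t ^ r) (g := fun _ => (1 : Matrix (Fin n) (Fin n) ℂ)) ?_ continuousOn_const) continuousOn_const
    intro t ht
    exact (Real.continuousAt_rpow_const t r (Or.inl (hb.trans ht).ne')).continuousWithinAt
  have hdetcont : ContinuousOn
      (fun t : ℝ => ((t ^ r) • (1 : Matrix (Fin n) (Fin n) ℂ) + A).det) (Set.Ioi b) :=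
    (continuous_id.matrix_det).comp_continuousOn hMcont
  have hadjcont : ContinuousOn
      (fun t : ℝ => ((t ^ r) • (1 : Matrix (Fin n) (Fin n) ℂ) + A).adjugate) (Set.Ioi b) :=
    (continuous_id.matrix_adjugate).comp_continuousOn hMcont
  have hfcont : ContinuousOn F (Set.Ioi b) := by
    refine ContinuousOn.congr
      ((hdetcont.inv₀ fun t ht => ((hkey t ht).2.1).ne_zero).smul hadjcont) ?_
    intro t ht
    rw [hFdef]
    simp only
    rw [Matrix.inv_def, Ring.inverse_eq_inv]
    rfl
  have hf_aesm : AEStronglyMeasurable F (volume.restrict (Set.Ioi b)) :=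
    hfcont.aestronglyMeasurable measurableSet_Ioi
  have hfint : Integrable F (volume.restrict (Set.Ioi b)) := by
    refine Integrable.mono' (hint1.const_mul (C * (2 * ν 1))) hf_aesm ?_
    rw [ae_restrict_iff' measurableSet_Ioi]
    filter_upwards with t
    intro ht
    calc ‖F t‖ ≤ C * ν (F t) := hC _
    _ ≤ C * (2 * ν 1 * t ^ (-r)) := mul_le_mul_of_nonneg_left ((hkey t ht).2.2.2) hC0
    _ = C * (2 * ν 1) * t ^ (-r) := by ring
  have hAfint : Integrable (fun t : ℝ => A * F t) (volume.restrict (Set.Ioi b)) :=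
    L.integrable_comp hfint
  have hpull : A * (∫ t in Set.Ioi b, F t) = ∫ t in Set.Ioi b, A * F t := by
    calc A * (∫ t in Set.Ioi b, F t) = L (∫ t in Set.Ioi b, F t) := rfl
    _ = ∫ t in Set.Ioi b, L (F t) := (L.integral_comp_comm hfint).symm
    _ = ∫ t in Set.Ioi b, A * F t := rfl
  have hmono : (∫ t in Set.Ioi b, ν (A * F t))
      ≤ ∫ t in Set.Ioi b, (ν A * t ^ (-r) + 2 * (ν A)^2 * t ^ (-(2*r))) := by
    refine integral_mono_of_nonneg (Filter.Eventually.of_forall fun t => hν_nonneg _)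
      ((hint1.const_mul (ν A)).add (hint2.const_mul (2 * (ν A)^2))) ?_
    filter_upwards [ae_restrict_mem measurableSet_Ioi] with t ht
    exact (hkey t ht).2.2.1
  have hval : (∫ t in Set.Ioi b, (ν A * t ^ (-r) + 2 * (ν A)^2 * t ^ (-(2*r))))
      = ν A * (-b ^ (-r + 1) / (-r + 1)) + 2 * (ν A)^2 * (-b ^ (-(2*r) + 1) / (-(2*r) + 1)) := by
    rw [integral_add (hint1.const_mul (ν A)) (hint2.const_mul (2 * (ν A)^2)),
        integral_const_mul, integral_const_mul,
        integral_Ioi_rpow_of_lt (by linarith) hb,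
        integral_Ioi_rpow_of_lt (by linarith) hb]
  have hfin : ν A * (-b ^ (-r + 1) / (-r + 1)) + 2 * (ν A)^2 * (-b ^ (-(2*r) + 1) / (-(2*r) + 1))
      ≤ ν A * (α / (1 - α) + α / (2 - α)) * b ^ (1 - r) := by
    have hBpos : (0:ℝ) < b ^ (1 - r) := Real.rpow_pos_of_pos hb _
    have hq0 : (0:ℝ) ≤ b ^ (-r) := Real.rpow_nonneg hb.le _
    have hsplit : b ^ (-(2*r) + 1) = b ^ (-r) * b ^ (1 - r) := by
      rw [show (-(2*r) + 1 : ℝ) = (-r) + (1 - r) by ring, Real.rpow_add hb]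
    have he1 : b ^ (-r + 1) = b ^ (1 - r) := by rw [show (-r + 1 : ℝ) = 1 - r by ring]
    rw [he1, hsplit]
    have hα2 : (0:ℝ) < 2 - α := by linarith
    have h1α : (0:ℝ) < 1 - α := by linarith
    have hc1 : (-1:ℝ)/(-r + 1) = α / (1 - α) := by
      rw [hrdef, div_eq_div_iff (by rw [hrdef] at hr1; linarith : -(1/α) + 1 < 0).ne
        (by linarith : (0:ℝ) < 1 - α).ne']
      field_simp
      ring
    have hc2 : (-1:ℝ)/(-(2*r) + 1) = α / (2 - α) := by
      rw [hrdef, div_eq_div_iff (by rw [hrdef] at hr1; linarith : -(2*(1/α)) + 1 < 0).ne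
        (by linarith : (0:ℝ) < 2 - α).ne']
      field_simp
      ring
    have heq1 : -b ^ (1 - r) / (-r + 1) = (α / (1 - α)) * b ^ (1 - r) := by
      calc -b ^ (1 - r) / (-r + 1) = b ^ (1 - r) * ((-1)/(-r + 1)) := by ring
      _ = b ^ (1 - r) * (α / (1 - α)) := by rw [hc1]
      _ = (α / (1 - α)) * b ^ (1 - r) := by ring
    have heq2 : -(b ^ (-r) * b ^ (1 - r)) / (-(2*r) + 1)
        = (α / (2 - α)) * (b ^ (-r) * b ^ (1 - r)) := by
      calc -(b ^ (-r) * b ^ (1 - r)) / (-(2*r) + 1)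
          = (b ^ (-r) * b ^ (1 - r)) * ((-1)/(-(2*r) + 1)) := by ring
      _ = (b ^ (-r) * b ^ (1 - r)) * (α / (2 - α)) := by rw [hc2]
      _ = (α / (2 - α)) * (b ^ (-r) * b ^ (1 - r)) := by ring
    rw [heq1, heq2]
    have hQ0 : (0:ℝ) ≤ α / (2 - α) := div_nonneg hα0.le hα2.le
    have hP0 : (0:ℝ) ≤ α / (1 - α) := div_nonneg hα0.le h1α.le
    have hprod : 0 ≤ ν A * (α / (2 - α)) * b ^ (1 - r) * (1 - 2 * (b ^ (-r) * ν A)) := by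
      refine mul_nonneg (mul_nonneg (mul_nonneg hνA.le hQ0) hBpos.le) ?_
      linarith [hbound]
    linarith [hprod]
  calc ν (A * ∫ t in Set.Ioi b, F t) = ν (∫ t in Set.Ioi b, A * F t) := by rw [hpull]
  _ ≤ ∫ t in Set.Ioi b, ν (A * F t) := key_int _ hAfint
  _ ≤ ∫ t in Set.Ioi b, (ν A * t ^ (-r) + 2 * (ν A)^2 * t ^ (-(2*r))) := hmono
  _ = ν A * (-b ^ (-r + 1) / (-r + 1)) + 2 * (ν A)^2 * (-b ^ (-(2*r) + 1) / (-(2*r) + 1)) := hval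
  _ ≤ ν A * (α / (1 - α) + α / (2 - α)) * b ^ (1 - r) := hfin
end
end

section
/- Let $\alpha \in (0,1)$, $b \ge 1$, and suppose $b^{-1/\alpha}\|A\| \le 1/2$. Then the series identity $\int_b^\infty (t^{1/\alpha} I + A)^{-1} \, dt = \sum_{k=0}^\infty (-1)^k A^k \frac{\alpha}{k+1-\alpha} b^{1-(k+1)/\alpha}$ holds, where the integral is taken entrywise and the series converges absolutely in norm. -/
open Real MeasureTheory Set

attribute [local instance] Matrix.frobeniusNormedAddCommGroup Matrix.frobeniusNormedSpace

private lemma nu_dominates {n : ℕ} (hn : 0 < n) (ν : Matrix (Fin n) (Fin n) ℂ → ℝ)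
    (hν_nonneg : ∀ X, 0 ≤ ν X)
    (hν_def : ∀ X, ν X = 0 ↔ X = 0)
    (hν_add : ∀ X Y, ν (X + Y) ≤ ν X + ν Y)
    (hν_smul : ∀ (c : ℂ) X, ν (c • X) = ‖c‖ * ν X) :
    ∃ C : ℝ, 0 < C ∧ ∀ X, ‖X‖ ≤ C * ν X := by
  classical
  have hν0 : ν 0 = 0 := (hν_def 0).mpr rfl
  -- entrywise bound by the Frobenius norm
  have entry : ∀ (X : Matrix (Fin n) (Fin n) ℂ) i j, ‖X i j‖ ≤ ‖X‖ := by
    intro X i j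
    rw [Matrix.frobenius_norm_def]
    calc ‖X i j‖ = (‖X i j‖ ^ (2:ℝ)) ^ (1/2:ℝ) := by
          rw [← Real.rpow_mul (norm_nonneg _)]
          norm_num
      _ ≤ (∑ i', ∑ j', ‖X i' j'‖ ^ (2:ℝ)) ^ (1/2:ℝ) := by
          apply Real.rpow_le_rpow (Real.rpow_nonneg (norm_nonneg _) _) ?_ (by norm_num)
          calc ‖X i j‖ ^ (2:ℝ) ≤ ∑ j', ‖X i j'‖ ^ (2:ℝ) :=
                Finset.single_le_sum (fun _ _ => Real.rpow_nonneg (norm_nonneg _) _)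
                  (Finset.mem_univ j)
            _ ≤ ∑ i', ∑ j', ‖X i' j'‖ ^ (2:ℝ) :=
                Finset.single_le_sum
                  (fun _ _ => Finset.sum_nonneg fun _ _ => Real.rpow_nonneg (norm_nonneg _) _)
                  (Finset.mem_univ i)
  -- ν is dominated by the Frobenius norm
  obtain ⟨C1, hC10, hC1⟩ : ∃ C1, 0 ≤ C1 ∧ ∀ X, ν X ≤ C1 * ‖X‖ := by
    refine ⟨∑ i, ∑ j, ν (Matrix.single i j 1),
      Finset.sum_nonneg fun _ _ => Finset.sum_nonneg fun _ _ => hν_nonneg _, fun X => ?_⟩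
    calc ν X = ν (∑ i, ∑ j, Matrix.single i j (X i j)) := by
          rw [← Matrix.matrix_eq_sum_single]
      _ ≤ ∑ i, ν (∑ j, Matrix.single i j (X i j)) :=
          Finset.le_sum_of_subadditive ν hν0.le hν_add _ _
      _ ≤ ∑ i, ∑ j, ν (Matrix.single i j (X i j)) :=
          Finset.sum_le_sum fun i _ => Finset.le_sum_of_subadditive ν hν0.le hν_add _ _
      _ ≤ ∑ i, ∑ j, ν (Matrix.single i j 1) * ‖X‖ := by
          apply Finset.sum_le_sum; intro i _; apply Finset.sum_le_sum; intro j _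
          have h1 : Matrix.single i j (X i j) = (X i j) • Matrix.single i j 1 := by
            rw [Matrix.smul_single]; simp
          rw [h1, hν_smul]
          calc ‖X i j‖ * ν (Matrix.single i j 1)
              ≤ ‖X‖ * ν (Matrix.single i j 1) :=
                mul_le_mul_of_nonneg_right (entry X i j) (hν_nonneg _)
            _ = ν (Matrix.single i j 1) * ‖X‖ := mul_comm _ _
      _ = (∑ i, ∑ j, ν (Matrix.single i j 1)) * ‖X‖ := by
          simp [Finset.sum_mul]
  have hν_neg : ∀ X, ν (-X) = ν X := by
    intro X
    have := hν_smul (-1) X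
    simpa using this
  have hlip : ∀ X Y, |ν X - ν Y| ≤ C1 * ‖X - Y‖ := by
    intro X Y
    have h1 : ν X ≤ ν (X - Y) + ν Y := by
      have := hν_add (X - Y) Y; rwa [sub_add_cancel] at this
    have h2 : ν Y ≤ ν (X - Y) + ν X := by
      have := hν_add (Y - X) X
      rwa [sub_add_cancel, show Y - X = -(X - Y) from (neg_sub X Y).symm, hν_neg] at this
    have h3 := hC1 (X - Y)
    rw [abs_sub_le_iff]
    constructor <;> linarith
  have hcont : Continuous ν := by
    have hl : LipschitzWith (Real.toNNReal C1) ν := by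
      apply LipschitzWith.of_dist_le_mul
      intro X Y
      rw [Real.dist_eq, dist_eq_norm]
      calc |ν X - ν Y| ≤ C1 * ‖X - Y‖ := hlip X Y
        _ ≤ (Real.toNNReal C1 : ℝ) * ‖X - Y‖ :=
            mul_le_mul_of_nonneg_right (Real.le_coe_toNNReal C1) (norm_nonneg _)
    exact hl.continuous
  haveI : Nonempty (Fin n) := ⟨⟨0, hn⟩⟩
  have hsne : (Metric.sphere (0 : Matrix (Fin n) (Fin n) ℂ) 1).Nonempty :=
    NormedSpace.sphere_nonempty.mpr zero_le_one
  obtain ⟨x0, hx0mem, hx0min⟩ :=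
    (isCompact_sphere (0 : Matrix (Fin n) (Fin n) ℂ) 1).exists_isMinOn hsne hcont.continuousOn
  have hx0norm : ‖x0‖ = 1 := by simpa using hx0mem
  have hx0ne : x0 ≠ 0 := by
    intro h; rw [h] at hx0norm; simp at hx0norm
  have hm : 0 < ν x0 :=
    lt_of_le_of_ne (hν_nonneg x0) (Ne.symm fun h => hx0ne ((hν_def x0).mp h))
  refine ⟨(ν x0)⁻¹, inv_pos.mpr hm, fun X => ?_⟩
  rcases eq_or_ne X 0 with rfl | hX
  · simp [hν0]
  · have hXn : 0 < ‖X‖ := norm_pos_iff.mpr hX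
    have hmem : (‖X‖⁻¹ : ℝ) • X ∈ Metric.sphere (0 : Matrix (Fin n) (Fin n) ℂ) 1 := by
      simp [norm_smul, abs_of_pos (inv_pos.mpr hXn), inv_mul_cancel₀ hXn.ne']
    have h1 : ν x0 ≤ ν ((‖X‖⁻¹ : ℝ) • X) := hx0min hmem
    have h2 : ν ((‖X‖⁻¹ : ℝ) • X) = ‖X‖⁻¹ * ν X := by
      have hsm : (‖X‖⁻¹ : ℝ) • X = ((‖X‖⁻¹ : ℝ) : ℂ) • X := by
        ext i j; simp [Complex.real_smul]
      rw [hsm, hν_smul]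
      simp [abs_of_nonneg (inv_nonneg.mpr hXn.le)]
    rw [h2] at h1
    have h3 : ‖X‖ * ν x0 ≤ ν X := by
      have := mul_le_mul_of_nonneg_left h1 hXn.le
      rwa [← mul_assoc, mul_inv_cancel₀ hXn.ne', one_mul] at this
    calc ‖X‖ = (ν x0)⁻¹ * (‖X‖ * ν x0) := by field_simp
      _ ≤ (ν x0)⁻¹ * ν X := mul_le_mul_of_nonneg_left h3 (inv_nonneg.mpr hm.le)

theorem matrix_tail_series_identity
    {n : ℕ} (α b : ℝ) (hα : α ∈ Set.Ioo (0:ℝ) 1) (hb : 1 ≤ b)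
    (A : Matrix (Fin n) (Fin n) ℂ)
    (ν : Matrix (Fin n) (Fin n) ℂ → ℝ)
    (hν_nonneg : ∀ X, 0 ≤ ν X)
    (hν_def : ∀ X, ν X = 0 ↔ X = 0)
    (hν_add : ∀ X Y, ν (X + Y) ≤ ν X + ν Y)
    (hν_smul : ∀ (c : ℂ) X, ν (c • X) = ‖c‖ * ν X)
    (hν_mul : ∀ X Y, ν (X * Y) ≤ ν X * ν Y)
    (hbound : b ^ (-(1/α)) * ν A ≤ 1/2) :
    (∫ t in Set.Ioi b, ((t ^ (1/α)) • (1 : Matrix (Fin n) (Fin n) ℂ) + A)⁻¹)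
        = ∑' k : ℕ, ((-1:ℝ)^k * (α / ((k:ℝ) + 1 - α)) * b ^ (1 - ((k:ℝ)+1)/α)) • A ^ k
    ∧ Summable (fun k : ℕ =>
        ν (((-1:ℝ)^k * (α / ((k:ℝ) + 1 - α)) * b ^ (1 - ((k:ℝ)+1)/α)) • A ^ k)) := by
  classical
  obtain ⟨hα0, hα1⟩ := hα
  have hb0 : (0:ℝ) < b := lt_of_lt_of_le one_pos hb
  have hν0 : ν 0 = 0 := (hν_def 0).mpr rfl
  -- trivial case n = 0
  rcases Nat.eq_zero_or_pos n with hn | hn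
  · subst hn
    haveI : Subsingleton (Matrix (Fin 0) (Fin 0) ℂ) := ⟨fun a c => by ext i j; exact i.elim0⟩
    refine ⟨Subsingleton.elim _ _, ?_⟩
    have hz : ∀ k : ℕ,
        ν (((-1:ℝ)^k * (α / ((k:ℝ) + 1 - α)) * b ^ (1 - ((k:ℝ)+1)/α)) • A ^ k) = 0 := by
      intro k
      rw [Subsingleton.elim (((-1:ℝ)^k * (α / ((k:ℝ) + 1 - α)) * b ^ (1 - ((k:ℝ)+1)/α)) • A ^ k)
        (0 : Matrix (Fin 0) (Fin 0) ℂ), hν0]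
    exact summable_zero.congr fun k => (hz k).symm
  -- the main case
  obtain ⟨C, hC0, hC⟩ := nu_dominates hn ν hν_nonneg hν_def hν_add hν_smul
  set r : ℝ := ν A with hr_def
  have hr0 : 0 ≤ r := hν_nonneg A
  have hqb0 : 0 < b ^ (-(1/α)) := Real.rpow_pos_of_pos hb0 _
  have hνpow : ∀ k : ℕ, ν (A ^ k) ≤ ν 1 * r ^ k := by
    intro k
    induction k with
    | zero => simp
    | succ k ih =>
      calc ν (A ^ (k+1)) = ν (A ^ k * A) := by rw [pow_succ]
        _ ≤ ν (A ^ k) * r := hν_mul _ _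
        _ ≤ (ν 1 * r ^ k) * r := mul_le_mul_of_nonneg_right ih hr0
        _ = ν 1 * r ^ (k+1) := by ring
  have hApow : ∀ k : ℕ, ‖A ^ k‖ ≤ (C * ν 1) * r ^ k := by
    intro k
    calc ‖A ^ k‖ ≤ C * ν (A ^ k) := hC _
      _ ≤ C * (ν 1 * r ^ k) := mul_le_mul_of_nonneg_left (hνpow k) hC0.le
      _ = (C * ν 1) * r ^ k := by ring
  have hCν0 : 0 ≤ C * ν 1 := mul_nonneg hC0.le (hν_nonneg 1)
  have hden : ∀ k : ℕ, 0 < (k:ℝ) + 1 - α := by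
    intro k
    have hk0 : (0:ℝ) ≤ (k:ℝ) := Nat.cast_nonneg k
    linarith
  have hek : ∀ k : ℕ, -(((k:ℝ)+1)/α) < -1 := by
    intro k
    have h1 : (1:ℝ) < ((k:ℝ)+1)/α := by
      rw [lt_div_iff₀ hα0]
      have hk0 : (0:ℝ) ≤ (k:ℝ) := Nat.cast_nonneg k
      nlinarith
    linarith
  have hEk : ∀ (t : ℝ), 0 < t → ∀ k : ℕ, t ^ (-(((k:ℝ)+1)/α)) = (t ^ (-(1/α)))^(k+1) := by
    intro t ht k
    rw [← Real.rpow_natCast (t ^ (-(1/α))) (k+1), ← Real.rpow_mul ht.le]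
    congr 1
    push_cast
    ring
  have hEk' : ∀ (t : ℝ), 0 < t → ∀ k : ℕ, t ^ (-((k:ℝ)/α)) = (t ^ (-(1/α)))^k := by
    intro t ht k
    rw [← Real.rpow_natCast (t ^ (-(1/α))) k, ← Real.rpow_mul ht.le]
    congr 1
    ring
  have hqt : ∀ t ∈ Set.Ioi b, t ^ (-(1/α)) ≤ b ^ (-(1/α)) := by
    intro t ht
    apply Real.rpow_le_rpow_of_nonpos hb0 (le_of_lt ht)
    have h1α : 0 < 1/α := by positivity
    linarith
  have hqtr : ∀ t ∈ Set.Ioi b, t ^ (-(1/α)) * r ≤ 1/2 := by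
    intro t ht
    calc t ^ (-(1/α)) * r ≤ b ^ (-(1/α)) * r := mul_le_mul_of_nonneg_right (hqt t ht) hr0
      _ ≤ 1/2 := hbound
  set g : ℕ → ℝ → Matrix (Fin n) (Fin n) ℂ :=
    fun k t => ((-1:ℝ)^k * t ^ (-(((k:ℝ)+1)/α))) • A ^ k with hg_def
  have hnormg : ∀ (t:ℝ), 0 < t → ∀ k, ‖g k t‖ = t ^ (-(((k:ℝ)+1)/α)) * ‖A ^ k‖ := by
    intro t ht k
    simp only [hg_def]
    rw [norm_smul, Real.norm_eq_abs, abs_mul, abs_pow, abs_neg, abs_one, one_pow,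
      one_mul, abs_of_nonneg (Real.rpow_nonneg ht.le _)]
  have hgle : ∀ t ∈ Set.Ioi b, ∀ k, ‖g k t‖ ≤ (b ^ (-(1/α)) * (C * ν 1)) * (1/2:ℝ)^k := by
    intro t ht k
    have ht0 : 0 < t := hb0.trans ht
    have hq0 : 0 ≤ t ^ (-(1/α)) := (Real.rpow_pos_of_pos ht0 _).le
    rw [hnormg t ht0 k, hEk t ht0 k, pow_succ']
    calc t ^ (-(1/α)) * (t ^ (-(1/α)))^k * ‖A ^ k‖
        ≤ t ^ (-(1/α)) * (t ^ (-(1/α)))^k * ((C * ν 1) * r ^ k) :=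
          mul_le_mul_of_nonneg_left (hApow k) (mul_nonneg hq0 (pow_nonneg hq0 k))
      _ = (t ^ (-(1/α)) * (C * ν 1)) * (t ^ (-(1/α)) * r)^k := by ring
      _ ≤ (b ^ (-(1/α)) * (C * ν 1)) * (1/2:ℝ)^k := by
          apply mul_le_mul
          · exact mul_le_mul_of_nonneg_right (hqt t ht) hCν0
          · exact pow_le_pow_left₀ (mul_nonneg hq0 hr0) (hqtr t ht) k
          · exact pow_nonneg (mul_nonneg hq0 hr0) k
          · exact mul_nonneg hqb0.le hCν0
  have hgeo : Summable (fun k : ℕ => (1/2:ℝ)^k) :=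
    summable_geometric_of_lt_one (by norm_num) (by norm_num)
  -- pointwise Neumann series for the inverse
  have hinv : ∀ t ∈ Set.Ioi b,
      ((t ^ (1/α)) • (1 : Matrix (Fin n) (Fin n) ℂ) + A)⁻¹ = ∑' k : ℕ, g k t := by
    intro t ht
    have ht0 : 0 < t := hb0.trans ht
    set B := (t ^ (1/α)) • (1 : Matrix (Fin n) (Fin n) ℂ) + A with hB_def
    have hgs : Summable (fun k => g k t) := by
      apply Summable.of_norm
      exact Summable.of_nonneg_of_le (fun k => norm_nonneg _) (hgle t ht)
        (hgeo.mul_left _)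
    set u : ℕ → Matrix (Fin n) (Fin n) ℂ :=
      fun k => ((-1:ℝ)^k * t ^ (-((k:ℝ)/α))) • A ^ k with hu_def
    have hus : Summable u := by
      apply Summable.of_norm
      apply Summable.of_nonneg_of_le (fun k => norm_nonneg _) ?_ (hgeo.mul_left (C * ν 1))
      intro k
      have hq0 : 0 ≤ t ^ (-(1/α)) := (Real.rpow_pos_of_pos ht0 _).le
      simp only [hu_def]
      rw [norm_smul, Real.norm_eq_abs, abs_mul, abs_pow, abs_neg, abs_one, one_pow,
        one_mul, abs_of_nonneg (Real.rpow_nonneg ht0.le _), hEk' t ht0 k]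
      calc (t ^ (-(1/α)))^k * ‖A ^ k‖
          ≤ (t ^ (-(1/α)))^k * ((C * ν 1) * r ^ k) :=
            mul_le_mul_of_nonneg_left (hApow k) (pow_nonneg hq0 k)
        _ = (C * ν 1) * (t ^ (-(1/α)) * r)^k := by ring
        _ ≤ (C * ν 1) * (1/2:ℝ)^k :=
            mul_le_mul_of_nonneg_left
              (pow_le_pow_left₀ (mul_nonneg hq0 hr0) (hqtr t ht) k) hCν0
    have hBu : ∀ k : ℕ, B * g k t = u k - u (k+1) := by
      intro k
      simp only [hu_def, hg_def, hB_def]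
      rw [Matrix.mul_smul, add_mul, Matrix.smul_mul, one_mul, ← pow_succ']
      rw [smul_add, smul_smul]
      have e1 : ((-1:ℝ)^k * t ^ (-(((k:ℝ)+1)/α))) * t ^ (1/α) = (-1:ℝ)^k * t ^ (-((k:ℝ)/α)) := by
        rw [mul_assoc, ← Real.rpow_add ht0]
        congr 2
        ring
      rw [e1, sub_eq_add_neg, ← neg_smul]
      congr 1
      congr 1
      push_cast
      ring
    have hu0 : u 0 = 1 := by
      simp [hu_def]
    have hBS : B * (∑' k, g k t) = 1 := by
      have hL := (LinearMap.toContinuousLinearMap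
        (LinearMap.mulLeft ℂ B)).map_tsum hgs
      simp only [LinearMap.coe_toContinuousLinearMap', LinearMap.mulLeft_apply] at hL
      rw [hL]
      have h2 : ∑' k, B * g k t = ∑' k, (u k - u (k+1)) := tsum_congr hBu
      rw [h2, hus.tsum_sub ((summable_nat_add_iff 1).mpr hus), hus.tsum_eq_zero_add,
        hu0, add_sub_cancel_right]
    exact Matrix.inv_eq_right_inv hBS
  -- exact value of the scalar integrals
  have hIk : ∀ k : ℕ, (∫ t in Set.Ioi b, t ^ (-(((k:ℝ)+1)/α)))
      = α/((k:ℝ)+1-α) * b ^ (1 - ((k:ℝ)+1)/α) := by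
    intro k
    rw [integral_Ioi_rpow_of_lt (hek k) hb0]
    have hs : -(((k:ℝ)+1)/α) + 1 = 1 - ((k:ℝ)+1)/α := by ring
    rw [hs]
    have hs0 : 1 - ((k:ℝ)+1)/α ≠ 0 := by
      have : ((k:ℝ)+1)/α > 1 := by
        rw [gt_iff_lt, lt_div_iff₀ hα0]
        have hk0 : (0:ℝ) ≤ (k:ℝ) := Nat.cast_nonneg k
        nlinarith
      linarith
    have hcc : α/((k:ℝ)+1-α) * (1 - ((k:ℝ)+1)/α) = -1 := by
      have h1 := hden k
      field_simp
      ring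
    rw [div_eq_iff hs0,
      show α / ((k:ℝ) + 1 - α) * b ^ (1 - ((k:ℝ)+1)/α) * (1 - ((k:ℝ)+1)/α)
        = (α / ((k:ℝ) + 1 - α) * (1 - ((k:ℝ)+1)/α)) * b ^ (1 - ((k:ℝ)+1)/α) from by ring,
      hcc]
    ring
  -- splitting powers of b in the coefficients
  have hbsplit : ∀ k : ℕ, b ^ (1 - ((k:ℝ)+1)/α) = b ^ (1 - 1/α) * (b ^ (-(1/α)))^k := by
    intro k
    rw [← Real.rpow_natCast (b ^ (-(1/α))) k, ← Real.rpow_mul hb0.le, ← Real.rpow_add hb0]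
    congr 1
    field_simp
    ring
  have hcoefpos : ∀ k : ℕ, 0 < α/((k:ℝ)+1-α) * b ^ (1 - ((k:ℝ)+1)/α) := by
    intro k
    have := hden k
    positivity
  have hcoefle : ∀ k : ℕ, α/((k:ℝ)+1-α) * b ^ (1 - ((k:ℝ)+1)/α)
      ≤ (α/(1-α) * b ^ (1 - 1/α)) * (b ^ (-(1/α)))^k := by
    intro k
    rw [hbsplit k]
    have h1 : α/((k:ℝ)+1-α) ≤ α/(1-α) := by
      apply div_le_div_of_nonneg_left hα0.le (by linarith)
      have hk0 : (0:ℝ) ≤ (k:ℝ) := Nat.cast_nonneg k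
      linarith
    calc α/((k:ℝ)+1-α) * (b ^ (1 - 1/α) * (b ^ (-(1/α)))^k)
        ≤ α/(1-α) * (b ^ (1 - 1/α) * (b ^ (-(1/α)))^k) := by
          apply mul_le_mul_of_nonneg_right h1
          positivity
      _ = (α/(1-α) * b ^ (1 - 1/α)) * (b ^ (-(1/α)))^k := by ring
  -- measurability and integrability
  haveI : TopologicalSpace.PseudoMetrizableSpace (Matrix (Fin n) (Fin n) ℂ) :=
    (inferInstance : TopologicalSpace.PseudoMetrizableSpace (Fin n → Fin n → ℂ))
  letI : ContinuousENorm (Matrix (Fin n) (Fin n) ℂ) := SeminormedAddGroup.toContinuousENorm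
  have hmeas : ∀ k : ℕ, AEStronglyMeasurable (fun t => g k t) (volume.restrict (Set.Ioi b)) := by
    intro k
    apply ContinuousOn.aestronglyMeasurable ?_ measurableSet_Ioi
    apply ContinuousOn.smul (f := fun t => (-1:ℝ)^k * t ^ (-(((k:ℝ)+1)/α))) (g := fun _ => A ^ k)
      ?_ continuousOn_const
    apply ContinuousOn.mul continuousOn_const
    intro t ht
    exact (Real.continuousAt_rpow_const t _ (Or.inl (ne_of_gt (hb0.trans ht)))).continuousWithinAt
  have hintk : ∀ k : ℕ, IntegrableOn (fun t => t ^ (-(((k:ℝ)+1)/α))) (Set.Ioi b) :=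
    fun k => integrableOn_Ioi_rpow_of_lt (hek k) hb0
  have hgint : ∀ k : ℕ, Integrable (fun t => g k t) (volume.restrict (Set.Ioi b)) := by
    intro k
    simp only [hg_def]
    exact ((hintk k).const_mul ((-1:ℝ)^k)).smul_const (A ^ k)
  -- summability of the lintegrals
  have hnormint : ∀ k : ℕ, (∫ t in Set.Ioi b, ‖g k t‖)
      = (α/((k:ℝ)+1-α) * b ^ (1 - ((k:ℝ)+1)/α)) * ‖A ^ k‖ := by
    intro k
    rw [setIntegral_congr_fun measurableSet_Ioi
      (fun t ht => hnormg t (hb0.trans ht) k)]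
    rw [integral_mul_const, hIk k]
  have hlint : (∑' k : ℕ, ∫⁻ t in Set.Ioi b, ‖g k t‖₊) ≠ ⊤ := by
    have hD2 : 0 ≤ (α/(1-α) * b ^ (1 - 1/α)) * (C * ν 1) := by
      have h1 : (0:ℝ) < 1 - α := by linarith
      have h2 : 0 ≤ α/(1-α) * b ^ (1 - 1/α) := by positivity
      exact mul_nonneg h2 hCν0
    have hterm_le : ∀ k : ℕ, (∫⁻ t in Set.Ioi b, ‖g k t‖₊)
        ≤ ENNReal.ofReal ((α/(1-α) * b ^ (1 - 1/α)) * (C * ν 1))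
          * ENNReal.ofReal (1/2) ^ k := by
      intro k
      simp_rw [← enorm_eq_nnnorm]
      rw [← ofReal_integral_norm_eq_lintegral_enorm (P := Matrix (Fin n) (Fin n) ℂ)
        (f := fun t => g k t) (hgint k), hnormint k]
      rw [← ENNReal.ofReal_pow (by norm_num : (0:ℝ) ≤ 1/2),
        ← ENNReal.ofReal_mul hD2]
      apply ENNReal.ofReal_le_ofReal
      calc (α/((k:ℝ)+1-α) * b ^ (1 - ((k:ℝ)+1)/α)) * ‖A ^ k‖
          ≤ ((α/(1-α) * b ^ (1 - 1/α)) * (b ^ (-(1/α)))^k) * ((C * ν 1) * r ^ k) := by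
            apply mul_le_mul (hcoefle k) (hApow k) (norm_nonneg _)
            have h1 : (0:ℝ) < 1 - α := by linarith
            positivity
        _ = ((α/(1-α) * b ^ (1 - 1/α)) * (C * ν 1)) * (b ^ (-(1/α)) * r)^k := by ring
        _ ≤ ((α/(1-α) * b ^ (1 - 1/α)) * (C * ν 1)) * (1/2:ℝ)^k := by
            apply mul_le_mul_of_nonneg_left
              (pow_le_pow_left₀ (mul_nonneg hqb0.le hr0) hbound k) hD2
    have hle : (∑' k : ℕ, ∫⁻ t in Set.Ioi b, ‖g k t‖₊)
        ≤ ENNReal.ofReal ((α/(1-α) * b ^ (1 - 1/α)) * (C * ν 1))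
            * (1 - ENNReal.ofReal (1/2))⁻¹ := by
      calc (∑' k : ℕ, ∫⁻ t in Set.Ioi b, ‖g k t‖₊)
          ≤ ∑' k : ℕ, ENNReal.ofReal ((α/(1-α) * b ^ (1 - 1/α)) * (C * ν 1))
              * ENNReal.ofReal (1/2) ^ k := ENNReal.tsum_le_tsum hterm_le
        _ = ENNReal.ofReal ((α/(1-α) * b ^ (1 - 1/α)) * (C * ν 1))
              * (1 - ENNReal.ofReal (1/2))⁻¹ := by
            rw [ENNReal.tsum_mul_left, ENNReal.tsum_geometric]
    refine ne_top_of_le_ne_top ?_ hle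
    apply ENNReal.mul_ne_top ENNReal.ofReal_ne_top
    rw [Ne, ENNReal.inv_eq_top, tsub_eq_zero_iff_le]
    exact not_le.mpr (ENNReal.ofReal_lt_one.mpr (by norm_num))
  -- value of each term of the series
  have hterm : ∀ k : ℕ, (∫ t in Set.Ioi b, g k t)
      = ((-1:ℝ)^k * (α / ((k:ℝ) + 1 - α)) * b ^ (1 - ((k:ℝ)+1)/α)) • A ^ k := by
    intro k
    simp only [hg_def]
    rw [integral_smul_const, integral_const_mul, hIk k]
    congr 1
    ring
  constructor
  · rw [setIntegral_congr_fun measurableSet_Ioi hinv]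
    exact (integral_tsum hmeas hlint).trans (tsum_congr hterm)
  · -- summability of the ν-values
    apply Summable.of_nonneg_of_le (fun k => hν_nonneg _) ?_
      (hgeo.mul_left ((α/(1-α) * b ^ (1 - 1/α)) * ν 1))
    intro k
    have hsm : ((-1:ℝ)^k * (α / ((k:ℝ) + 1 - α)) * b ^ (1 - ((k:ℝ)+1)/α)) • A ^ k
        = (((((-1:ℝ)^k * (α / ((k:ℝ) + 1 - α)) * b ^ (1 - ((k:ℝ)+1)/α)) : ℝ) : ℂ)) • A ^ k := by
      ext i j
      simp [Complex.real_smul]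
    rw [hsm, hν_smul]
    have habs : ‖((((-1:ℝ)^k * (α / ((k:ℝ) + 1 - α)) * b ^ (1 - ((k:ℝ)+1)/α)) : ℝ) : ℂ)‖
        = α / ((k:ℝ) + 1 - α) * b ^ (1 - ((k:ℝ)+1)/α) := by
      rw [Complex.norm_real, Real.norm_eq_abs, abs_mul, abs_mul, abs_pow, abs_neg, abs_one,
        one_pow, one_mul, abs_of_nonneg (le_of_lt (div_pos hα0 (hden k))),
        abs_of_nonneg (Real.rpow_nonneg hb0.le _)]
    rw [habs]
    calc α / ((k:ℝ) + 1 - α) * b ^ (1 - ((k:ℝ)+1)/α) * ν (A ^ k)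
        ≤ ((α/(1-α) * b ^ (1 - 1/α)) * (b ^ (-(1/α)))^k) * (ν 1 * r ^ k) := by
          apply mul_le_mul (hcoefle k) (hνpow k) (hν_nonneg _)
          have h1 : (0:ℝ) < 1 - α := by linarith
          positivity
      _ = ((α/(1-α) * b ^ (1 - 1/α)) * ν 1) * (b ^ (-(1/α)) * r)^k := by ring
      _ ≤ ((α/(1-α) * b ^ (1 - 1/α)) * ν 1) * (1/2:ℝ)^k := by
          apply mul_le_mul_of_nonneg_left
            (pow_le_pow_left₀ (mul_nonneg hqb0.le hr0) hbound k)
          have h1 : (0:ℝ) < 1 - α := by linarith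
          have h2 : 0 ≤ α/(1-α) * b ^ (1 - 1/α) := by positivity
          exact mul_nonneg h2 (hν_nonneg 1)
end

section
/- For $\lambda > 0$ define $y_k = \arcsin\left(\sqrt{\frac{(\log\lambda)^2 + \pi^2/4 + k^2\pi^2 - \sqrt{[(\log\lambda)^2 + \pi^2/4 + k^2\pi^2]^2 - k^2\pi^4}}{\pi^2/2}}\right)$ for positive integers $k$. Then $y_1 \le y_k$ for all integers $k \ge 2$. -/
open Real

theorem closest_pole_is_k_one
    (lam : ℝ) (hlam : 0 < lam) :
    ∀ k : ℕ, 2 ≤ k →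
      Real.arcsin (Real.sqrt
        (((Real.log lam)^2 + π^2/4 + (1:ℝ)^2*π^2
          - Real.sqrt (((Real.log lam)^2 + π^2/4 + (1:ℝ)^2*π^2)^2 - (1:ℝ)^2*π^4)) / (π^2/2)))
      ≤ Real.arcsin (Real.sqrt
        (((Real.log lam)^2 + π^2/4 + (k:ℝ)^2*π^2
          - Real.sqrt (((Real.log lam)^2 + π^2/4 + (k:ℝ)^2*π^2)^2 - (k:ℝ)^2*π^4)) / (π^2/2))) := by
  intro k hk
  have hpi := Real.pi_pos
  have hpi2 : (0:ℝ) < π^2 := by positivity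
  obtain ⟨A, hA⟩ : ∃ A : ℝ, A = (Real.log lam)^2 + π^2/4 := ⟨_, rfl⟩
  have hA4 : π^2/4 ≤ A := by rw [hA]; nlinarith [sq_nonneg (Real.log lam)]
  have hApos : 0 < A := by linarith
  have hK : (2:ℝ) ≤ (k:ℝ) := by exact_mod_cast hk
  obtain ⟨K, hKdef⟩ : ∃ K : ℝ, K = (k:ℝ) := ⟨_, rfl⟩
  rw [← hA, ← hKdef]
  have hK' : (2:ℝ) ≤ K := by rw [hKdef]; exact hK
  have hK21 : (0:ℝ) ≤ K^2 - 1 := by nlinarith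
  -- s1 : sqrt for k = 1
  have hs1sq : (0:ℝ) ≤ (A + (1:ℝ)^2*π^2)^2 - (1:ℝ)^2*π^4 := by nlinarith
  obtain ⟨s1, hs1⟩ : ∃ s : ℝ, s = Real.sqrt ((A + (1:ℝ)^2*π^2)^2 - (1:ℝ)^2*π^4) := ⟨_, rfl⟩
  rw [← hs1]
  have hs1nn : 0 ≤ s1 := hs1 ▸ Real.sqrt_nonneg _
  have hs1sq' : s1^2 = (A + (1:ℝ)^2*π^2)^2 - (1:ℝ)^2*π^4 := by
    rw [hs1]; exact Real.sq_sqrt hs1sq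
  have hs1lb : A + π^2/2 ≤ s1 := by
    rw [hs1, show A + π^2/2 = Real.sqrt ((A + π^2/2)^2) from
      (Real.sqrt_sq (by positivity)).symm]
    apply Real.sqrt_le_sqrt
    nlinarith [mul_le_mul_of_nonneg_right hA4 hpi2.le]
  -- bound for s_k
  have hprod : 0 ≤ ((K^2 - 1)*π^2) * (s1 - (A + π^2/2)) :=
    mul_nonneg (mul_nonneg hK21 hpi2.le) (by linarith)
  have hsk : Real.sqrt ((A + K^2*π^2)^2 - K^2*π^4) ≤ (K^2 - 1)*π^2 + s1 := by
    have h1 : (A + K^2*π^2)^2 - K^2*π^4 ≤ ((K^2 - 1)*π^2 + s1)^2 := by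
      nlinarith [hprod, hs1sq']
    calc Real.sqrt ((A + K^2*π^2)^2 - K^2*π^4)
        ≤ Real.sqrt (((K^2 - 1)*π^2 + s1)^2) := Real.sqrt_le_sqrt h1
      _ = (K^2 - 1)*π^2 + s1 := by
          apply Real.sqrt_sq
          nlinarith [mul_nonneg hK21 hpi2.le]
  apply Real.monotone_arcsin
  apply Real.sqrt_le_sqrt
  apply div_le_div_of_nonneg_right ?_ (by positivity)
  linarith [hsk]
end

section
/- For $\lambda > 0$, define $d_0(\lambda) = \arcsin\left(\sqrt{\frac{(\log\lambda)^2 + 5\pi^2/4 - \sqrt{[(\log\lambda)^2 + 5\pi^2/4]^2 - \pi^4}}{\pi^2/2}}\right)$. Then $d_0$ is strictly decreasing on $(1,\infty)$ and strictly increasing on $(0,1)$, and $d_0(1) = \pi/2$. -/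
open Real

noncomputable def d0 (lam : ℝ) : ℝ :=
  Real.arcsin (Real.sqrt
    (((Real.log lam)^2 + 5*π^2/4
      - Real.sqrt (((Real.log lam)^2 + 5*π^2/4)^2 - π^4)) / (π^2/2)))

private lemma pi4_pos : (0:ℝ) < π^4 := by positivity

private lemma G_sub_pos {t : ℝ} (ht : π^2 ≤ t) : 0 ≤ t^2 - π^4 := by
  nlinarith [sq_nonneg π, pi_pos, sq_nonneg (t - π^2)]

private lemma G_pos {t : ℝ} (ht : π^2 ≤ t) : 0 < t - Real.sqrt (t^2 - π^4) := by
  have htpos : 0 < t := lt_of_lt_of_le (by positivity) ht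
  have h1 : Real.sqrt (t^2 - π^4) < Real.sqrt (t^2) := by
    apply Real.sqrt_lt_sqrt (G_sub_pos ht)
    nlinarith [pi4_pos]
  rw [Real.sqrt_sq htpos.le] at h1
  linarith

private lemma G_eq {t : ℝ} (ht : π^2 ≤ t) :
    t - Real.sqrt (t^2 - π^4) = π^4 / (t + Real.sqrt (t^2 - π^4)) := by
  have htpos : 0 < t := lt_of_lt_of_le (by positivity) ht
  have hs : Real.sqrt (t^2 - π^4) ^ 2 = t^2 - π^4 := Real.sq_sqrt (G_sub_pos ht)
  have hden : 0 < t + Real.sqrt (t^2 - π^4) := by positivity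
  field_simp
  nlinarith [hs]

private lemma G_anti {t1 t2 : ℝ} (h1 : π^2 ≤ t1) (h : t1 < t2) :
    t2 - Real.sqrt (t2^2 - π^4) < t1 - Real.sqrt (t1^2 - π^4) := by
  have h2 : π^2 ≤ t2 := h1.trans h.le
  rw [G_eq h1, G_eq h2]
  have ht1pos : 0 < t1 := lt_of_lt_of_le (by positivity) h1
  apply div_lt_div_of_pos_left pi4_pos
  · linarith [Real.sqrt_nonneg (t1^2 - π^4)]
  · have : Real.sqrt (t1^2 - π^4) ≤ Real.sqrt (t2^2 - π^4) := by
      apply Real.sqrt_le_sqrt; nlinarith [pi_pos]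
    linarith

private lemma G_at0 : (5*π^2/4) - Real.sqrt ((5*π^2/4)^2 - π^4) = π^2/2 := by
  have : (5*π^2/4)^2 - π^4 = (3*π^2/4)^2 := by ring
  rw [this, Real.sqrt_sq (by positivity)]
  ring

private lemma base (t : ℝ) (ht : 5*π^2/4 ≤ t) : π^2 ≤ t := by nlinarith [sq_nonneg π, pi_pos]

private lemma G_le {t : ℝ} (ht : 5*π^2/4 ≤ t) : t - Real.sqrt (t^2 - π^4) ≤ π^2/2 := by
  rcases eq_or_lt_of_le ht with h | h
  · rw [← h, G_at0]
  · rw [← G_at0]; exact (G_anti (base _ le_rfl) h).le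

private lemma key {s1 s2 : ℝ} (h1 : 0 ≤ s1) (h : s1 < s2) :
    Real.arcsin (Real.sqrt ((s2 + 5*π^2/4 - Real.sqrt ((s2+5*π^2/4)^2 - π^4))/(π^2/2)))
    < Real.arcsin (Real.sqrt ((s1 + 5*π^2/4 - Real.sqrt ((s1+5*π^2/4)^2 - π^4))/(π^2/2))) := by
  set t1 := s1 + 5*π^2/4 with ht1
  set t2 := s2 + 5*π^2/4 with ht2
  have hb1 : 5*π^2/4 ≤ t1 := by rw [ht1]; linarith
  have hb2 : 5*π^2/4 ≤ t2 := by rw [ht2]; linarith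
  have hπ1 : π^2 ≤ t1 := base _ hb1
  have hπ2 : π^2 ≤ t2 := base _ hb2
  have hlt : t1 < t2 := by rw [ht1, ht2]; linarith
  have hG : t2 - Real.sqrt (t2^2 - π^4) < t1 - Real.sqrt (t1^2 - π^4) := G_anti hπ1 hlt
  have hp2 : 0 < π^2/2 := by positivity
  have hd : (t2 - Real.sqrt (t2^2 - π^4))/(π^2/2) < (t1 - Real.sqrt (t1^2 - π^4))/(π^2/2) :=
    div_lt_div_of_pos_right hG hp2
  have hs : Real.sqrt ((t2 - Real.sqrt (t2^2 - π^4))/(π^2/2))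
      < Real.sqrt ((t1 - Real.sqrt (t1^2 - π^4))/(π^2/2)) := by
    apply Real.sqrt_lt_sqrt _ hd
    exact div_nonneg (G_pos hπ2).le hp2.le
  apply Real.strictMonoOn_arcsin _ _ hs
  · constructor
    · linarith [Real.sqrt_nonneg ((t2 - Real.sqrt (t2^2 - π^4))/(π^2/2))]
    · rw [Real.sqrt_le_one, div_le_one hp2]
      exact G_le hb2
  · constructor
    · linarith [Real.sqrt_nonneg ((t1 - Real.sqrt (t1^2 - π^4))/(π^2/2))]
    · rw [Real.sqrt_le_one, div_le_one hp2]
      exact G_le hb1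

theorem d0_monotonicity :
    StrictAntiOn d0 (Set.Ioi 1) ∧ StrictMonoOn d0 (Set.Ioo 0 1) ∧ d0 1 = π/2 := by
  refine ⟨?_, ?_, ?_⟩
  · intro a ha b hb hab
    simp only [Set.mem_Ioi] at ha hb
    have hla : 0 < Real.log a := Real.log_pos ha
    have hlb : Real.log a < Real.log b := Real.log_lt_log (by linarith) hab
    have : (Real.log a)^2 < (Real.log b)^2 := by nlinarith
    exact key (sq_nonneg _) this
  · intro a ha b hb hab
    obtain ⟨ha0, ha1⟩ := ha
    obtain ⟨hb0, hb1⟩ := hb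
    have hlb : Real.log b < 0 := Real.log_neg hb0 hb1
    have hla : Real.log a < Real.log b := Real.log_lt_log ha0 hab
    have : (Real.log b)^2 < (Real.log a)^2 := by nlinarith
    exact key (sq_nonneg _) this
  · unfold d0
    rw [Real.log_one]
    have : (0:ℝ)^2 + 5*π^2/4 - Real.sqrt (((0:ℝ)^2 + 5*π^2/4)^2 - π^4) = π^2/2 := by
      rw [show ((0:ℝ)^2 + 5*π^2/4) = 5*π^2/4 by ring, G_at0]
    rw [this, div_self (by positivity), Real.sqrt_one, Real.arcsin_one]
end

section
/- Let $\lambda > 0$, $0 < d < \pi/2$, $|y| \le d$, and let $x > 0$ satisfy $\exp\left(\frac{\pi}{2}\sinh(x)\cos(d)\right) \ge 2\lambda$. Then $\left|\exp\left(\frac{\pi}{2}\sinh(x+\mathrm{i}y)\right) + \lambda\right| \ge \frac{1}{2}\exp\left(\frac{\pi}{2}\sinh(x)\cos(y)\right)$, and consequently $\frac{|\exp(\frac{\alpha\pi}{2}\sinh(x+\mathrm{i}y))|}{|\exp(\frac{\pi}{2}\sinh(x+\mathrm{i}y)) + \lambda|} \le 2\exp\left(-\frac{(1-\alpha)\pi\cos(d)}{2}\sinh(x)\right)$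 for any $\alpha \in (0,1)$. -/
open Real Complex

/-
On the line Im z = y the real part of sinh z is sinh x · cos y, so |exp(π/2 · sinh z)| = e^t with
t = π/2 · sinh x · cos y ≥ π/2 · sinh x · cos d. The hypothesis makes λ ≤ e^t / 2, and the reverse
triangle inequality gives |exp(π/2 · sinh z) + λ| ≥ e^t / 2. The quotient is then at most
2 e^{αt} / e^t = 2 e^{-(1-α)t}, and t may be replaced by its lower bound.
-/

theorem Complex.sinh_add_mul_I_re (x y : ℝ) :
    (Complex.sinh (x + y * I)).re = Real.sinh x * Real.cos y := by
  simp [Complex.sinh_add, Complex.sinh_mul_I, Complex.cosh_mul_I, ← ofReal_sinh, ← ofReal_cosh,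
    ← ofReal_cos, ← ofReal_sin]

theorem Complex.norm_exp_ofReal_mul_sinh_add_mul_I (c x y : ℝ) :
    ‖Complex.exp (c * Complex.sinh (x + y * I))‖ = Real.exp (c * (Real.sinh x * Real.cos y)) := by
  rw [Complex.norm_exp, re_ofReal_mul, Complex.sinh_add_mul_I_re]

theorem Real.cos_le_cos_of_abs_le {y d : ℝ} (hy : |y| ≤ d) (hd : d ≤ π) :
    Real.cos d ≤ Real.cos y :=
  Real.cos_abs y ▸ Real.cos_le_cos_of_nonneg_of_le_pi (abs_nonneg y) hd hy

theorem norm_div_two_le_norm_add {E : Type*} [SeminormedAddCommGroup E] {a b : E}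
    (h : 2 * ‖b‖ ≤ ‖a‖) : ‖a‖ / 2 ≤ ‖a + b‖ := by
  have := norm_sub_norm_le a (-b)
  rw [norm_neg, sub_neg_eq_add] at this
  linarith

theorem decay_right_in_strip_general
    (lam d : ℝ) (hlam : 0 < lam) (hd2 : d < π/2)
    (y : ℝ) (hy : |y| ≤ d) (x : ℝ) (hx : 0 < x)
    (hbig : 2 * lam ≤ Real.exp (π/2 * Real.sinh x * Real.cos d)) :
    (1/2) * Real.exp (π/2 * Real.sinh x * Real.cos y)
        ≤ ‖Complex.exp ((π/2) * Complex.sinh (x + y * Complex.I)) + lam‖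
    ∧ ∀ α : ℝ, α ∈ Set.Ioo (0:ℝ) 1 →
        ‖Complex.exp ((α * π / 2) * Complex.sinh (x + y * Complex.I))‖
            / ‖Complex.exp ((π/2) * Complex.sinh (x + y * Complex.I)) + lam‖
          ≤ 2 * Real.exp (-((1 - α) * π * Real.cos d / 2) * Real.sinh x) := by
  have ht : π/2 * Real.sinh x * Real.cos d ≤ π/2 * Real.sinh x * Real.cos y := by
    have hsinh : 0 < Real.sinh x := Real.sinh_pos_iff.2 hx
    gcongr
    exact Real.cos_le_cos_of_abs_le hy (by linarith [pi_pos])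
  set t := π/2 * Real.sinh x * Real.cos y with ht_def
  have hnorm : ‖Complex.exp ((π/2) * Complex.sinh (x + y * I))‖ = Real.exp t := by
    rw [← ofReal_ofNat, ← ofReal_div, norm_exp_ofReal_mul_sinh_add_mul_I, ← mul_assoc]
  have hden : (1/2) * Real.exp t ≤ ‖Complex.exp ((π/2) * Complex.sinh (x + y * I)) + lam‖ := by
    rw [one_div_mul_eq_div, ← hnorm]
    apply norm_div_two_le_norm_add
    rw [hnorm, norm_real, norm_of_nonneg hlam.le]
    exact hbig.trans (Real.exp_le_exp.2 ht)
  refine ⟨hden, fun α ⟨_, hα1⟩ => ?_⟩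
  have hnum : ‖Complex.exp ((α * π / 2) * Complex.sinh (x + y * I))‖ = Real.exp (α * t) := by
    rw [← ofReal_ofNat, ← ofReal_mul, ← ofReal_div, norm_exp_ofReal_mul_sinh_add_mul_I, ht_def]
    ring_nf
  calc _ ≤ Real.exp (α * t) / ((1/2) * Real.exp t) := by
        rw [hnum]; gcongr
    _ = 2 * Real.exp (-((1 - α) * t)) := by
        rw [show -((1 - α) * t) = α * t - t by ring, Real.exp_sub]
        field_simp
    _ ≤ _ := by
        gcongr
        nlinarith [mul_le_mul_of_nonneg_left ht (by linarith : (0:ℝ) ≤ 1 - α)]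

theorem decay_right_in_strip
    (lam d : ℝ) (hlam : 0 < lam) (hd : 0 < d) (hd2 : d < π/2)
    (y : ℝ) (hy : |y| ≤ d) (x : ℝ) (hx : 0 < x)
    (hbig : 2 * lam ≤ Real.exp (π/2 * Real.sinh x * Real.cos d)) :
    (1/2) * Real.exp (π/2 * Real.sinh x * Real.cos y)
        ≤ ‖Complex.exp ((π/2) * Complex.sinh (x + y * Complex.I)) + lam‖
    ∧ ∀ α : ℝ, α ∈ Set.Ioo (0:ℝ) 1 →
        ‖Complex.exp ((α * π / 2) * Complex.sinh (x + y * Complex.I))‖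
            / ‖Complex.exp ((π/2) * Complex.sinh (x + y * Complex.I)) + lam‖
          ≤ 2 * Real.exp (-((1 - α) * π * Real.cos d / 2) * Real.sinh x) :=
  decay_right_in_strip_general lam d hlam hd2 y hy x hx hbig
end
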